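/- Let α > 0, m ∈ ℤ₊, and for 0 < c < 1 set I_m^{(∞)}(t) = ∫₀^c (−log λ)^{−α} λ^m e^{−λt} dλ, and for c > 1 set I_m^{(0)}(t) = ∫_c^∞ (log λ)^{−α} λ^m e^{−λt} dλ. Then I_m^{(∞)}(t) = m! · t^{−1−m} |log t|^{−α} (1 + O(|log t|^{-1})) as t → ∞, and I_m^{(0)}(t) has the same asymptotic behaviour m! · t^{−1−m} |log t|^{−α} (1 + O(|log t|^{-1})) as t → 0. -/

import Mathlib

noncomputable section
open MeasureTheory Filter Asymptotics Set

/-- Lebesgue measure restricted to `(0, ∞)`. -/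
abbrev muP : Measure ℝ := volume.restrict (Set.Ioi (0:ℝ))

/-- The Hilbert space `L²((0,∞))`. -/
abbrev HSp := Lp ℂ 2 muP

/-- The Hilbert space `L²(ℝ)`. -/
abbrev HLine := Lp ℂ 2 (volume : Measure ℝ)

/-- The Hilbert space `ℓ²(ℤ₊)`. -/
abbrev ellTwo := lp (fun _ : ℕ => ℂ) 2

/-- `H` is the Hankel operator with kernel `h` : `(Hu)(t) = ∫₀^∞ h(t+s) u(s) ds`. -/
def IsHankel (h : ℝ → ℂ) (H : HSp →L[ℂ] HSp) : Prop :=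
  ∀ u : HSp, ∀ᵐ t ∂muP, (H u : ℝ → ℂ) t = ∫ s in Set.Ioi (0:ℝ), h (t + s) * (u : ℝ → ℂ) s

/-- `G` is the discrete Hankel operator with matrix elements `g` :
`(Gu)(j) = ∑ₖ g(j+k) u(k)`. -/
def IsHankelD (g : ℕ → ℂ) (G : ellTwo →L[ℂ] ellTwo) : Prop :=
  ∀ u : ellTwo, ∀ j : ℕ, (G u : ℕ → ℂ) j = ∑' k : ℕ, g (j + k) * (u : ℕ → ℂ) k

/-- `λₙ⁺(K)`, the `n`-th positive eigenvalue (non-increasing, with multiplicity) of a compact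
self-adjoint operator `K`, expressed through the Courant–Fischer max-min principle
(the value is `0` if `K` has fewer than `n` positive eigenvalues). -/
def posEig {E : Type*} [NormedAddCommGroup E] [InnerProductSpace ℂ E]
    (K : E →L[ℂ] E) (n : ℕ) : ℝ :=
  ⨆ V : {V : Submodule ℂ E // Module.finrank ℂ V = n},
    ⨅ x : {x : E // x ∈ V.1 ∧ ‖x‖ = 1}, (@inner ℂ E _ (K x.1) x.1).re

/-- `λₙ⁻(K) = λₙ⁺(-K)`. -/
def negEig {E : Type*} [NormedAddCommGroup E] [InnerProductSpace ℂ E]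
    (K : E →L[ℂ] E) (n : ℕ) : ℝ := posEig (-K) n

/-- `sₙ(K)`, the `n`-th singular value of a compact operator `K`, via the max–min principle. -/
def singVal {E : Type*} [NormedAddCommGroup E] [InnerProductSpace ℂ E]
    (K : E →L[ℂ] E) (n : ℕ) : ℝ :=
  ⨆ V : {V : Submodule ℂ E // Module.finrank ℂ V = n},
    ⨅ x : {x : E // x ∈ V.1 ∧ ‖x‖ = 1}, ‖K x.1‖

/-- `N(α) = [α] + 1` if `α ≥ 1/2`, and `N(α) = 0` if `α < 1/2`. -/
def Nal (α : ℝ) : ℕ := if α < 1/2 then 0 else Nat.floor α + 1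

/-- The constant `τ(α) = 2^{-α} π^{1-2α} B(1/(2α), 1/2)^α`. -/
def tauC (α : ℝ) : ℝ :=
  (2:ℝ) ^ (-α) * Real.pi ^ (1 - 2*α) *
    (Real.Gamma (1/(2*α)) * Real.Gamma (1/2) / Real.Gamma (1/(2*α) + 1/2)) ^ α

/-- Iterated differences of a sequence: `g⁽⁰⁾ = g`, `g⁽ᵐ⁾(j) = g⁽ᵐ⁻¹⁾(j+1) - g⁽ᵐ⁻¹⁾(j)`. -/
def iterDiff {E : Type*} [Sub E] (g : ℕ → E) : ℕ → ℕ → E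
  | 0 => g
  | m + 1 => fun j => iterDiff g m (j + 1) - iterDiff g m j

/-- The standard function `v(x) = √π / √(cosh πx)`. -/
def vStd (x : ℝ) : ℝ := Real.sqrt Real.pi / Real.sqrt (Real.cosh (Real.pi * x))

/-- The Fourier transform `(Φw)(ξ) = (2π)^{-1/2} ∫ e^{-ixξ} w(x) dx`. -/
def fou (w : ℝ → ℂ) (ξ : ℝ) : ℂ :=
  (((2 * Real.pi) ^ (-(1:ℝ)/2) : ℝ) : ℂ) * ∫ x : ℝ, Complex.exp (-(Complex.I * x * ξ)) * w x

/-- `h ∈ L^∞_loc((0,∞))`. -/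
def LinftyLoc {E : Type*} [NormedAddCommGroup E] (h : ℝ → E) : Prop :=
  AEStronglyMeasurable h muP ∧
    ∀ K : Set ℝ, IsCompact K → K ⊆ Set.Ioi 0 → ∃ C, ∀ᵐ t ∂muP, t ∈ K → ‖h t‖ ≤ C

/-- The quadratic-form characterization of the pseudodifferential operator
`A = v(X) s(D) v(X)` on `L²(ℝ)`:  `⟪g, A f⟫ = ∫ conj((Φ(v·g))(ξ)) s(ξ) (Φ(v·f))(ξ) dξ`
for all `f, g` represented by smooth compactly supported functions. -/
def IsVSDV (v : ℝ → ℝ) (s : ℝ → ℂ) (A : HLine →L[ℂ] HLine) : Prop :=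
  ∀ (f g : HLine) (F G : ℝ → ℂ),
    ContDiff ℝ (⊤ : ℕ∞) F → HasCompactSupport F → ContDiff ℝ (⊤ : ℕ∞) G → HasCompactSupport G →
    (f : ℝ → ℂ) =ᵐ[volume] F → (g : ℝ → ℂ) =ᵐ[volume] G →
    (@inner ℂ HLine _ g (A f)) =
      ∫ ξ : ℝ, (starRingEnd ℂ) (fou (fun x => (v x : ℂ) * G x) ξ) * s ξ *
        fou (fun x => (v x : ℂ) * F x) ξ

section ProofHelpers
variable {m : ℕ} {t : ℝ}


lemma intOn_rpow_exp {s b : ℝ} (hs : -1 < s) (hb : 0 < b) :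
    IntegrableOn (fun x : ℝ => x ^ s * Real.exp (-(x * b))) (Set.Ioi 0) := by
  have h := integrableOn_rpow_mul_exp_neg_mul_rpow hs one_pos hb
  refine h.congr_fun (fun x _ => ?_) measurableSet_Ioi
  beta_reduce
  rw [Real.rpow_one, neg_mul, mul_comm b x]

lemma int_rpow_exp {a b : ℝ} (ha : 0 < a) (hb : 0 < b) :
    ∫ x in Set.Ioi (0:ℝ), x ^ (a-1) * Real.exp (-(x*b)) = Real.Gamma a * b ^ (-a) := by
  rw [show (fun x:ℝ => x ^ (a-1) * Real.exp (-(x*b))) = fun x:ℝ => x^(a-1) * Real.exp (-(b*x)) by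
    funext x; rw [mul_comm x b]]
  rw [Real.integral_rpow_mul_exp_neg_mul_Ioi ha hb, one_div, Real.inv_rpow hb.le,
    ← Real.rpow_neg hb.le, mul_comm]

lemma intOn_pow_exp (m : ℕ) {b : ℝ} (hb : 0 < b) :
    IntegrableOn (fun x : ℝ => x ^ m * Real.exp (-(x * b))) (Set.Ioi 0) := by
  have h := intOn_rpow_exp (s := (m:ℝ)) (by exact_mod_cast neg_one_lt_zero.trans_le m.cast_nonneg) hb
  simpa [Real.rpow_natCast] using h

lemma int_pow_exp (m : ℕ) {b : ℝ} (hb : 0 < b) :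
    ∫ x in Set.Ioi (0:ℝ), x ^ m * Real.exp (-(x*b))
      = (Nat.factorial m : ℝ) * b ^ (-1 - (m:ℝ)) := by
  have h := int_rpow_exp (a := (m:ℝ)+1) (by positivity) hb
  simp only [add_sub_cancel_right] at h
  rw [show (fun x:ℝ => x ^ m * Real.exp (-(x*b))) = fun x:ℝ => x^((m:ℝ)) * Real.exp (-(x*b)) by
    funext x; rw [Real.rpow_natCast]] at *
  rw [h, Real.Gamma_nat_eq_factorial, show -((m:ℝ)+1) = -1 - m by ring]

lemma abs_log_le {s : ℝ} (hs : 0 < s) : |Real.log s| ≤ 2 * s ^ (-(2⁻¹):ℝ) + s := by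
  rcases le_or_gt s 1 with h | h
  · have h0 : Real.log s ≤ 0 := Real.log_nonpos hs.le h
    rw [abs_of_nonpos h0]
    have h1 : Real.log (s ^ (-(2⁻¹):ℝ)) ≤ s ^ (-(2⁻¹):ℝ) := by
      have h2 := Real.log_le_sub_one_of_pos (Real.rpow_pos_of_pos hs (-(2⁻¹):ℝ))
      linarith
    rw [Real.log_rpow hs] at h1
    nlinarith
  · rw [abs_of_pos (Real.log_pos h)]
    have := Real.log_le_sub_one_of_pos hs
    have : (0:ℝ) ≤ 2 * s ^ (-(2⁻¹):ℝ) := by positivity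
    linarith [Real.log_le_sub_one_of_pos hs]

lemma mvt_rpow {α : ℝ} (hα : 0 < α) {b x y : ℝ} (hb : 0 < b) (hx : b ≤ x) (hy : b ≤ y) :
    |x ^ (-α) - y ^ (-α)| ≤ α * b ^ (-α-1) * |x - y| := by
  have key := Convex.norm_image_sub_le_of_norm_hasDerivWithin_le
    (f := fun u : ℝ => u ^ (-α)) (f' := fun u : ℝ => -α * u ^ (-α-1))
    (C := α * b ^ (-α-1)) (s := Set.Ici b) (x := y) (y := x)
    (fun u hu => ((Real.hasDerivAt_rpow_const
      (Or.inl (ne_of_gt (lt_of_lt_of_le hb hu))))).hasDerivWithinAt)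
    ?_ (convex_Ici b) (Set.mem_Ici.mpr hy) (Set.mem_Ici.mpr hx)
  · simpa [Real.norm_eq_abs, abs_sub_comm] using key
  · intro u hu
    simp only [Set.mem_Ici] at hu
    have hu0 : 0 < u := lt_of_lt_of_le hb hu
    rw [norm_mul, norm_neg, Real.norm_eq_abs, Real.norm_eq_abs, abs_of_pos hα,
      abs_of_pos (Real.rpow_pos_of_pos hu0 _)]
    have : u ^ (-α-1) ≤ b ^ (-α-1) :=
      Real.rpow_le_rpow_of_nonpos hb hu (by linarith)
    exact mul_le_mul_of_nonneg_left this hα.le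
lemma J_eq (ht : 0 < t) :
    Set.EqOn (fun l : ℝ => l ^ m * Real.exp (-(l*t)) * (2*(l*t) ^ (-(2⁻¹):ℝ) + l*t))
      (fun l : ℝ => (2*t ^ (-(2⁻¹):ℝ)) * (l ^ ((m:ℝ)-2⁻¹) * Real.exp (-(l*t)))
        + t * (l ^ ((m:ℝ)+1) * Real.exp (-(l*t)))) (Set.Ioi 0) := by
  intro l hl
  have hl0 : (0:ℝ) < l := hl
  have h1 : (l*t) ^ (-(2⁻¹):ℝ) = l ^ (-(2⁻¹):ℝ) * t ^ (-(2⁻¹):ℝ) := Real.mul_rpow hl0.le ht.le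
  have h2 : l ^ ((m:ℝ)-2⁻¹) = l ^ m * l ^ (-(2⁻¹):ℝ) := by
    rw [show (m:ℝ)-2⁻¹ = (m:ℝ) + (-2⁻¹) by ring, Real.rpow_add hl0, Real.rpow_natCast]
  have h3 : l ^ ((m:ℝ)+1) = l ^ m * l := by
    rw [Real.rpow_add hl0, Real.rpow_natCast, Real.rpow_one]
  simp only [h1, h2, h3]
  ring

lemma hm1 : (-1:ℝ) < (m:ℝ) - 2⁻¹ := by
  have : (0:ℝ) ≤ m := m.cast_nonneg; linarith

lemma hm2 : (-1:ℝ) < (m:ℝ) + 1 := by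
  have : (0:ℝ) ≤ m := m.cast_nonneg; linarith

lemma intOn_J (ht : 0 < t) :
    IntegrableOn (fun l : ℝ => l ^ m * Real.exp (-(l*t)) * (2*(l*t) ^ (-(2⁻¹):ℝ) + l*t))
      (Set.Ioi 0) := by
  have i1 := (intOn_rpow_exp (hm1 (m := m)) ht).const_mul (2*t ^ (-(2⁻¹):ℝ))
  have i2 := (intOn_rpow_exp (hm2 (m := m)) ht).const_mul t
  exact IntegrableOn.congr_fun (i1.add i2) (fun l hl => ((J_eq ht) hl).symm) measurableSet_Ioi

lemma int_J (ht : 0 < t) :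
    ∫ l in Set.Ioi (0:ℝ), l ^ m * Real.exp (-(l*t)) * (2*(l*t) ^ (-(2⁻¹):ℝ) + l*t)
      = (2*Real.Gamma ((m:ℝ)+2⁻¹) + Real.Gamma ((m:ℝ)+2)) * t ^ (-1-(m:ℝ)) := by
  have i1 := (intOn_rpow_exp (hm1 (m := m)) ht).const_mul (2*t ^ (-(2⁻¹):ℝ))
  have i2 := (intOn_rpow_exp (hm2 (m := m)) ht).const_mul t
  rw [setIntegral_congr_fun measurableSet_Ioi (J_eq ht), integral_add i1 i2,
    integral_const_mul, integral_const_mul]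
  have e1 : ∫ l in Set.Ioi (0:ℝ), l ^ ((m:ℝ)-2⁻¹) * Real.exp (-(l*t))
      = Real.Gamma ((m:ℝ)+2⁻¹) * t ^ (-((m:ℝ)+2⁻¹)) := by
    have h := int_rpow_exp (a := (m:ℝ)+2⁻¹) (by positivity) ht
    rwa [show (m:ℝ)+2⁻¹-1 = (m:ℝ)-2⁻¹ by ring] at h
  have e2 : ∫ l in Set.Ioi (0:ℝ), l ^ ((m:ℝ)+1) * Real.exp (-(l*t))
      = Real.Gamma ((m:ℝ)+2) * t ^ (-((m:ℝ)+2)) := by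
    have h := int_rpow_exp (a := (m:ℝ)+2) (by positivity) ht
    rwa [show (m:ℝ)+2-1 = (m:ℝ)+1 by ring] at h
  rw [e1, e2]
  have p1 : t ^ (-(2⁻¹):ℝ) * t ^ (-((m:ℝ)+2⁻¹)) = t ^ (-1-(m:ℝ)) := by
    rw [← Real.rpow_add ht]; ring_nf
  have p2 : t * t ^ (-((m:ℝ)+2)) = t ^ (-1-(m:ℝ)) := by
    nth_rewrite 1 [← Real.rpow_one t]
    rw [← Real.rpow_add ht]; ring_nf
  linear_combination (2*Real.Gamma ((m:ℝ)+2⁻¹)) * p1 + Real.Gamma ((m:ℝ)+2) * p2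

lemma tendsto_rpow_neg_log (p q : ℝ) (hp : 0 < p) :
    Tendsto (fun t : ℝ => t ^ p * (-Real.log t) ^ q) (nhdsWithin 0 (Set.Ioi 0)) (nhds 0) := by
  have h1 : Tendsto (fun t : ℝ => -Real.log t) (nhdsWithin 0 (Set.Ioi 0)) atTop :=
    tendsto_neg_atBot_atTop.comp Real.tendsto_log_nhdsGT_zero
  have h2 := (tendsto_rpow_mul_exp_neg_mul_atTop_nhds_zero q p hp).comp h1
  refine h2.congr' ?_
  filter_upwards [self_mem_nhdsWithin] with t (ht : 0 < t)
  simp only [Function.comp]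
  rw [show -p * -Real.log t = Real.log t * p by ring, ← Real.rpow_def_of_pos ht]
  ring

lemma tendsto_rpow_exp_sqrt (γ : ℝ) :
    Tendsto (fun t : ℝ => t ^ γ * Real.exp (-(t ^ (2⁻¹:ℝ)))) atTop (nhds 0) := by
  have h1 : Tendsto (fun t:ℝ => t ^ (2⁻¹:ℝ)) atTop atTop := tendsto_rpow_atTop (by norm_num)
  have h2 := (tendsto_rpow_mul_exp_neg_mul_atTop_nhds_zero (2*γ) 1 one_pos).comp h1
  refine h2.congr' ?_
  filter_upwards [eventually_ge_atTop (0:ℝ)] with t ht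
  simp only [Function.comp]
  rw [← Real.rpow_mul ht, show (2⁻¹:ℝ) * (2*γ) = γ by ring, neg_one_mul]

lemma piece_mvt (ht : 0 < t) {K0 : ℝ} (hK : 0 ≤ K0)
    {S : Set ℝ} (hS : MeasurableSet S) (hsub : S ⊆ Set.Ioi 0) {D : ℝ → ℝ}
    (hD : ∀ l ∈ S, |D l| ≤ K0 * |Real.log (l*t)|) :
    ∫ l in S, |D l * (l ^ m * Real.exp (-(l*t)))|
      ≤ K0 * ((2*Real.Gamma ((m:ℝ)+2⁻¹) + Real.Gamma ((m:ℝ)+2)) * t ^ (-1-(m:ℝ))) := by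
  set G : ℝ → ℝ := fun l => l ^ m * Real.exp (-(l*t)) * (2*(l*t) ^ (-(2⁻¹):ℝ) + l*t) with hGdef
  have hG : IntegrableOn G (Set.Ioi 0) := intOn_J ht
  have hGnn : ∀ l ∈ Set.Ioi (0:ℝ), 0 ≤ G l := by
    intro l hl
    have hl0 : (0:ℝ) < l := hl
    have : (0:ℝ) < l * t := mul_pos hl0 ht
    positivity
  have step1 : ∫ l in S, |D l * (l ^ m * Real.exp (-(l*t)))| ≤ ∫ l in S, K0 * G l := by
    refine integral_mono_of_nonneg (Eventually.of_forall fun l => abs_nonneg _)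
      (IntegrableOn.mono_set (hG.const_mul K0) hsub) ?_
    rw [EventuallyLE, ae_restrict_iff' hS]
    refine Eventually.of_forall fun l hl => ?_
    have hl0 : (0:ℝ) < l := hsub hl
    have hlt : (0:ℝ) < l * t := mul_pos hl0 ht
    have hgnn : (0:ℝ) ≤ l ^ m * Real.exp (-(l*t)) := by positivity
    rw [abs_mul, abs_of_nonneg hgnn]
    calc |D l| * (l ^ m * Real.exp (-(l*t)))
        ≤ (K0 * |Real.log (l*t)|) * (l ^ m * Real.exp (-(l*t))) :=
          mul_le_mul_of_nonneg_right (hD l hl) hgnn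
      _ ≤ (K0 * (2*(l*t) ^ (-(2⁻¹):ℝ) + l*t)) * (l ^ m * Real.exp (-(l*t))) := by
          refine mul_le_mul_of_nonneg_right (mul_le_mul_of_nonneg_left ?_ hK) hgnn
          exact abs_log_le hlt
      _ = K0 * G l := by rw [hGdef]; ring
  have step2 : ∫ l in S, K0 * G l ≤ K0 * ∫ l in Set.Ioi (0:ℝ), G l := by
    rw [integral_const_mul]
    refine mul_le_mul_of_nonneg_left ?_ hK
    refine setIntegral_mono_set hG ?_ (HasSubset.Subset.eventuallyLE hsub)
    rw [EventuallyLE, ae_restrict_iff' measurableSet_Ioi]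
    exact Eventually.of_forall fun l hl => hGnn l hl
  calc _ ≤ _ := step1
    _ ≤ _ := step2
    _ = _ := by rw [int_J ht]

lemma tendsto_log_exp {b : ℝ} (hb : 0 < b) :
    Tendsto (fun t : ℝ => Real.log t * Real.exp (-(b*t))) atTop (nhds 0) := by
  refine squeeze_zero' ?_ ?_ (tendsto_rpow_mul_exp_neg_mul_atTop_nhds_zero 1 b hb)
  · filter_upwards [eventually_ge_atTop (1:ℝ)] with t ht
    have := Real.log_nonneg ht
    positivity
  · filter_upwards [eventually_ge_atTop (1:ℝ)] with t ht
    have h1 : Real.log t ≤ t := by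
      have := Real.log_le_sub_one_of_pos (lt_of_lt_of_le one_pos ht); linarith
    rw [Real.rpow_one, show -b*t = -(b*t) by ring]
    exact mul_le_mul_of_nonneg_right h1 (Real.exp_nonneg _)

set_option maxHeartbeats 2000000 in
theorem part1 (α : ℝ) (hα : 0 < α) (m : ℕ) (c : ℝ) (hc0 : 0 < c) (hc1 : c < 1) :
    (fun t : ℝ =>
        (∫ l in Set.Ioo (0:ℝ) c, (-Real.log l) ^ (-α) * l ^ m * Real.exp (-(l * t))) -
          (Nat.factorial m : ℝ) * t ^ (-1 - (m:ℝ)) * |Real.log t| ^ (-α))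
      =O[atTop]
        (fun t : ℝ => (Nat.factorial m : ℝ) * t ^ (-1 - (m:ℝ)) * |Real.log t| ^ (-α) *
          |Real.log t|⁻¹) := by
  set C0 : ℝ := 2*Real.Gamma ((m:ℝ)+2⁻¹) + Real.Gamma ((m:ℝ)+2) with hC0def
  have hC0 : 0 < C0 := by
    have g1 : 0 < Real.Gamma ((m:ℝ)+2⁻¹) := Real.Gamma_pos_of_pos (by positivity)
    have g2 : 0 < Real.Gamma ((m:ℝ)+2) := Real.Gamma_pos_of_pos (by positivity)
    positivity
  have hlogc : 0 < -Real.log c := neg_pos.mpr (Real.log_neg hc0 hc1)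
  set C1 : ℝ := (-Real.log c) ^ (-α) + 1 with hC1def
  have hC1 : 0 < C1 := by positivity
  rw [Asymptotics.isBigO_iff]
  refine ⟨α * 2^(α+1) * C0 + 2, ?_⟩
  -- eventual hypotheses
  have ev3 : ∀ᶠ t : ℝ in atTop,
      (C1*c) * (t ^ ((1:ℝ)+(m:ℝ)+(α+1)) * Real.exp (-(t ^ (2⁻¹:ℝ)))) ≤ 1 := by
    have h := (tendsto_rpow_exp_sqrt ((1:ℝ)+(m:ℝ)+(α+1))).const_mul (C1*c)
    rw [mul_zero] at h
    exact h.eventually_le_const one_pos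
  have ev4 : ∀ᶠ t : ℝ in atTop,
      (2 ^ ((1:ℝ)+(m:ℝ)) * (Nat.factorial m : ℝ)) *
        (Real.log t * Real.exp (-(c/2*t))) ≤ 1 := by
    have h := (tendsto_log_exp (half_pos hc0)).const_mul
      (2 ^ ((1:ℝ)+(m:ℝ)) * (Nat.factorial m : ℝ))
    rw [mul_zero] at h
    exact h.eventually_le_const one_pos
  have ev2 : ∀ᶠ t : ℝ in atTop, t ^ (-(2⁻¹):ℝ) < c :=
    (tendsto_rpow_neg_atTop (by norm_num)).eventually_lt_const hc0
  filter_upwards [Real.tendsto_log_atTop.eventually_ge_atTop 1, ev2, ev3, ev4,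
    eventually_gt_atTop 1] with t hL1 hac hev3 hev4 ht1
  have ht0 : (0:ℝ) < t := lt_trans one_pos ht1
  set L : ℝ := Real.log t with hLdef
  have hL0 : 0 < L := lt_of_lt_of_le one_pos hL1
  have habs : |Real.log t| = L := abs_of_pos hL0
  set a : ℝ := t ^ (-(2⁻¹):ℝ) with hadef
  have ha0 : 0 < a := Real.rpow_pos_of_pos ht0 _
  set g : ℝ → ℝ := fun l => l ^ m * Real.exp (-(l*t)) with hgdef
  set D : ℝ → ℝ := fun l => (-Real.log l) ^ (-α) - L ^ (-α) with hDdef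
  set R : ℝ := t ^ (-1-(m:ℝ)) * L ^ (-α-1) with hRdef
  have hR0 : 0 < R := by
    have := Real.rpow_pos_of_pos ht0 (-1-(m:ℝ))
    have := Real.rpow_pos_of_pos hL0 (-α-1)
    positivity
  -- integrability
  have hIoi : Set.Ioo (0:ℝ) c ∪ Set.Ici c = Set.Ioi 0 := Set.Ioo_union_Ici_eq_Ioi hc0
  have hg : IntegrableOn g (Set.Ioi 0) := intOn_pow_exp m ht0
  have hgc : IntegrableOn g (Set.Ioo 0 c) :=
    hg.mono_set (by rw [← hIoi]; exact Set.subset_union_left)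
  have hgci : IntegrableOn g (Set.Ici c) :=
    hg.mono_set (by rw [← hIoi]; exact Set.subset_union_right)
  have hgnn : ∀ l : ℝ, 0 ≤ l → 0 ≤ g l := fun l hl =>
    mul_nonneg (pow_nonneg hl m) (Real.exp_nonneg _)
  have hdisj : Disjoint (Set.Ioo (0:ℝ) c) (Set.Ici c) :=
    (Set.Iio_disjoint_Ici le_rfl).mono Set.Ioo_subset_Iio_self le_rfl
  have hsplit : ∫ l in Set.Ioi (0:ℝ), g l
      = (∫ l in Set.Ioo (0:ℝ) c, g l) + ∫ l in Set.Ici c, g l := by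
    rw [← hIoi, setIntegral_union hdisj measurableSet_Ici hgc hgci]
  -- integrability of f
  set f : ℝ → ℝ := fun l => (-Real.log l) ^ (-α) * l ^ m * Real.exp (-(l * t)) with hfdef
  have hmono : ∀ l : ℝ, l ∈ Set.Ioo (0:ℝ) c → (-Real.log l) ^ (-α) ≤ (-Real.log c) ^ (-α) := by
    intro l hl
    have h1 : Real.log l ≤ Real.log c := Real.log_le_log hl.1 hl.2.le
    exact Real.rpow_le_rpow_of_nonpos hlogc (by linarith) (by linarith)
  have hfm : AEStronglyMeasurable f (volume.restrict (Set.Ioo 0 c)) := by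
    refine ContinuousOn.aestronglyMeasurable ?_ measurableSet_Ioo
    refine ContinuousOn.mul (ContinuousOn.mul ?_ (continuous_pow m).continuousOn)
      (Real.continuous_exp.comp (by continuity)).continuousOn
    refine ContinuousOn.rpow_const (ContinuousOn.neg (Real.continuousOn_log.mono ?_)) ?_
    · intro l hl; exact ne_of_gt hl.1
    · intro l hl
      left
      have hll : Real.log l < 0 := Real.log_neg hl.1 (hl.2.trans hc1)
      exact ne_of_gt (by linarith)
  have hfnn : ∀ l : ℝ, l ∈ Set.Ioo (0:ℝ) c → 0 ≤ f l := by
    intro l hl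
    have hll : Real.log l < 0 := Real.log_neg hl.1 (hl.2.trans hc1)
    have h2 : (0:ℝ) ≤ -Real.log l := by linarith
    simp only [hfdef]
    exact mul_nonneg (mul_nonneg (Real.rpow_nonneg h2 _) (pow_nonneg hl.1.le m))
      (Real.exp_nonneg _)
  have hf : IntegrableOn f (Set.Ioo 0 c) := by
    refine Integrable.mono' (hgc.const_mul ((-Real.log c) ^ (-α))) hfm ?_
    rw [ae_restrict_iff' measurableSet_Ioo]
    refine Eventually.of_forall fun l hl => ?_
    rw [Real.norm_eq_abs, abs_of_nonneg (hfnn l hl)]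
    have h3 : 0 ≤ l ^ m * Real.exp (-(l*t)) :=
      mul_nonneg (pow_nonneg hl.1.le m) (Real.exp_nonneg _)
    calc f l = (-Real.log l) ^ (-α) * (l ^ m * Real.exp (-(l*t))) := by rw [hfdef]; ring
      _ ≤ (-Real.log c) ^ (-α) * (l ^ m * Real.exp (-(l*t))) :=
          mul_le_mul_of_nonneg_right (hmono l hl) h3
      _ = (-Real.log c) ^ (-α) * g l := by simp only [hgdef]
  have hDg : IntegrableOn (fun l => D l * g l) (Set.Ioo 0 c) := by
    refine IntegrableOn.congr_fun (hf.sub (hgc.const_mul (L ^ (-α))))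
      (fun l hl => ?_) measurableSet_Ioo
    simp only [hDdef, hfdef, hgdef, Pi.sub_apply]; ring
  -- key decomposition
  have hfac : (Nat.factorial m : ℝ) * t ^ (-1-(m:ℝ)) = ∫ l in Set.Ioi (0:ℝ), g l :=
    (int_pow_exp m ht0).symm
  have key : (∫ l in Set.Ioo (0:ℝ) c, f l)
        - (Nat.factorial m : ℝ) * t ^ (-1 - (m:ℝ)) * |Real.log t| ^ (-α)
      = (∫ l in Set.Ioo (0:ℝ) c, D l * g l) - (∫ l in Set.Ici c, g l) * L ^ (-α) := by
    rw [habs]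
    have e1 : ∫ l in Set.Ioo (0:ℝ) c, D l * g l
        = (∫ l in Set.Ioo (0:ℝ) c, f l) - L ^ (-α) * ∫ l in Set.Ioo (0:ℝ) c, g l := by
      rw [← integral_const_mul, ← integral_sub hf (hgc.const_mul _)]
      refine setIntegral_congr_fun measurableSet_Ioo fun l hl => ?_
      simp only [hDdef, hfdef, hgdef]; ring
    have e2 : (Nat.factorial m : ℝ) * t ^ (-1-(m:ℝ))
        = (∫ l in Set.Ioo (0:ℝ) c, g l) + ∫ l in Set.Ici c, g l := by rw [hfac, hsplit]
    linear_combination (-1 : ℝ) * e1 + (-(L ^ (-α))) * e2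
  -- splitting of the Ioo 0 c integral of |D*g|
  have hdisj2 : Disjoint (Set.Ioo (0:ℝ) a) (Set.Ico a c) :=
    (Set.Iio_disjoint_Ici le_rfl).mono Set.Ioo_subset_Iio_self Set.Ico_subset_Ici_self
  have hsplit2 : Set.Ioo (0:ℝ) a ∪ Set.Ico a c = Set.Ioo 0 c :=
    Set.Ioo_union_Ico_eq_Ioo ha0 hac.le
  have hDgabs : IntegrableOn (fun l => |D l * g l|) (Set.Ioo 0 c) := hDg.abs
  have habsplit : ∫ l in Set.Ioo (0:ℝ) c, |D l * g l|
      = (∫ l in Set.Ioo (0:ℝ) a, |D l * g l|) + ∫ l in Set.Ico a c, |D l * g l| := by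
    rw [← hsplit2, setIntegral_union hdisj2 measurableSet_Ico
      (hDgabs.mono_set (by rw [← hsplit2]; exact Set.subset_union_left))
      (hDgabs.mono_set (by rw [← hsplit2]; exact Set.subset_union_right))]
  -- Piece 1 : the MVT piece
  have hP1 : ∫ l in Set.Ioo (0:ℝ) a, |D l * g l| ≤ (α * 2^(α+1) * C0) * R := by
    have hL2 : (0:ℝ) < L/2 := by linarith
    have hK0 : (0:ℝ) ≤ α * (L/2)^(-α-1) := by positivity
    have hD1 : ∀ l ∈ Set.Ioo (0:ℝ) a, |D l| ≤ (α * (L/2)^(-α-1)) * |Real.log (l*t)| := by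
      intro l hl
      have hl0 : (0:ℝ) < l := hl.1
      have hla : Real.log l < Real.log a := Real.log_lt_log hl0 hl.2
      rw [hadef, Real.log_rpow ht0] at hla
      have hx : L/2 ≤ -Real.log l := by rw [hLdef] at *; linarith
      have hy : L/2 ≤ L := by linarith
      have hmvt := mvt_rpow hα hL2 hx hy
      have harg : -Real.log l - L = -(Real.log (l*t)) := by
        rw [Real.log_mul (ne_of_gt hl0) (ne_of_gt ht0), hLdef]; ring
      simp only [hDdef]
      calc |(-Real.log l) ^ (-α) - L ^ (-α)|
          ≤ α * (L/2)^(-α-1) * |(-Real.log l) - L| := hmvt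
        _ = α * (L/2)^(-α-1) * |Real.log (l*t)| := by
            rw [show -Real.log l - L = -(Real.log (l*t)) from harg, abs_neg]
    have h := piece_mvt (m := m) ht0 hK0 measurableSet_Ioo
      (fun l hl => hl.1) hD1
    have hpow : ((L/2 : ℝ))^(-α-1) = L^(-α-1) * 2^(α+1) := by
      rw [div_eq_mul_inv, Real.mul_rpow hL0.le (by norm_num : (0:ℝ) ≤ 2⁻¹),
        Real.inv_rpow (by norm_num : (0:ℝ) ≤ 2),
        ← Real.rpow_neg (by norm_num : (0:ℝ) ≤ 2) (-α-1),
        show (-(-α-1):ℝ) = α+1 by ring]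
    calc ∫ l in Set.Ioo (0:ℝ) a, |D l * g l|
        = ∫ l in Set.Ioo (0:ℝ) a, |D l * (l ^ m * Real.exp (-(l*t)))| := by
          refine setIntegral_congr_fun measurableSet_Ioo fun l hl => ?_
          simp only [hgdef]
      _ ≤ (α * (L/2)^(-α-1)) * (C0 * t ^ (-1-(m:ℝ))) := h
      _ = (α * 2^(α+1) * C0) * R := by rw [hpow, hRdef]; ring
  -- Piece 2 : the bounded piece
  have hP2 : ∫ l in Set.Ico a c, |D l * g l| ≤ R := by
    have hbound : ∀ l ∈ Set.Ico a c, ‖|D l * g l|‖ ≤ C1 * Real.exp (-(t ^ (2⁻¹:ℝ))) := by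
      intro l hl
      have hl0 : (0:ℝ) < l := lt_of_lt_of_le ha0 hl.1
      have hl1 : l < 1 := lt_trans hl.2 hc1
      have h1 : Real.log l ≤ Real.log c := Real.log_le_log hl0 hl.2.le
      have h2 : (-Real.log l) ^ (-α) ≤ (-Real.log c) ^ (-α) :=
        Real.rpow_le_rpow_of_nonpos hlogc (by linarith) (by linarith)
      have h3 : L ^ (-α) ≤ 1 := Real.rpow_le_one_of_one_le_of_nonpos hL1 (by linarith)
      have hD2 : |D l| ≤ C1 := by
        simp only [hDdef]
        refine (abs_sub _ _).trans ?_
        have hnl : (0:ℝ) < -Real.log l := by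
          have := Real.log_neg hl0 hl1; linarith
        rw [abs_of_nonneg (Real.rpow_nonneg hnl.le _),
          abs_of_nonneg (Real.rpow_nonneg hL0.le _), hC1def]
        exact add_le_add h2 h3
      have hg1 : g l ≤ Real.exp (-(t ^ (2⁻¹:ℝ))) := by
        have hlm : l ^ m ≤ 1 := pow_le_one₀ hl0.le hl1.le
        have ha_t : a * t = t ^ (2⁻¹:ℝ) := by
          rw [hadef]
          nth_rewrite 2 [show t = t ^ (1:ℝ) from (Real.rpow_one t).symm]
          rw [← Real.rpow_add ht0]; norm_num
        have hat : t ^ (2⁻¹:ℝ) ≤ l * t := by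
          have := mul_le_mul_of_nonneg_right hl.1 ht0.le
          rw [ha_t] at this; linarith
        calc g l = l ^ m * Real.exp (-(l*t)) := by simp only [hgdef]
          _ ≤ 1 * Real.exp (-(t ^ (2⁻¹:ℝ))) :=
              mul_le_mul hlm (Real.exp_le_exp.mpr (by linarith)) (Real.exp_nonneg _)
                one_pos.le
          _ = Real.exp (-(t ^ (2⁻¹:ℝ))) := one_mul _
      rw [Real.norm_eq_abs, abs_abs, abs_mul, abs_of_nonneg (hgnn l hl0.le)]
      exact mul_le_mul hD2 hg1 (hgnn l hl0.le) hC1.le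
    have hDgIco : IntegrableOn (fun l => |D l * g l|) (Set.Ico a c) :=
      hDgabs.mono_set (by rw [← hsplit2]; exact Set.subset_union_right)
    have h := norm_setIntegral_le_of_norm_le_const
      (measure_Ico_lt_top : volume (Set.Ico a c) < ⊤) hbound
    have hvol : (volume (Set.Ico a c)).toReal = c - a := by
      rw [Real.volume_Ico, ENNReal.toReal_ofReal (by linarith)]
    have hIab : ∫ l in Set.Ico a c, |D l * g l| ≤ C1 * Real.exp (-(t ^ (2⁻¹:ℝ))) * c := by
      calc ∫ l in Set.Ico a c, |D l * g l| ≤ ‖∫ l in Set.Ico a c, |D l * g l|‖ :=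
            le_abs_self _
        _ ≤ C1 * Real.exp (-(t ^ (2⁻¹:ℝ))) * (volume (Set.Ico a c)).toReal := h
        _ = C1 * Real.exp (-(t ^ (2⁻¹:ℝ))) * (c - a) := by rw [hvol]
        _ ≤ C1 * Real.exp (-(t ^ (2⁻¹:ℝ))) * c := by
            refine mul_le_mul_of_nonneg_left (by linarith) ?_
            positivity
    refine hIab.trans ?_
    -- C1 * exp(-√t) * c ≤ R , using hev3
    have hpos : (0:ℝ) < t ^ ((1:ℝ)+(m:ℝ)+(α+1)) := Real.rpow_pos_of_pos ht0 _
    have hcb : C1 * c * Real.exp (-(t ^ (2⁻¹:ℝ))) ≤ t ^ (-((1:ℝ)+(m:ℝ)+(α+1))) := by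
      rw [Real.rpow_neg ht0.le, inv_eq_one_div (t ^ ((1:ℝ)+(m:ℝ)+(α+1))), le_div_iff₀ hpos]
      exact le_of_eq_of_le (by ring) hev3
    have hsplitpow : t ^ (-((1:ℝ)+(m:ℝ)+(α+1))) = t ^ (-1-(m:ℝ)) * t ^ (-(α+1)) := by
      rw [← Real.rpow_add ht0]; ring_nf
    have hLt : L ≤ t := by
      have := Real.log_le_sub_one_of_pos ht0
      rw [hLdef]; linarith
    have ht_le : t ^ (-(α+1)) ≤ L ^ (-(α+1)) :=
      Real.rpow_le_rpow_of_nonpos hL0 hLt (by linarith)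
    calc C1 * Real.exp (-(t ^ (2⁻¹:ℝ))) * c
        = C1 * c * Real.exp (-(t ^ (2⁻¹:ℝ))) := by ring
      _ ≤ t ^ (-1-(m:ℝ)) * t ^ (-(α+1)) := by rw [← hsplitpow]; exact hcb
      _ ≤ t ^ (-1-(m:ℝ)) * L ^ (-(α+1)) :=
          mul_le_mul_of_nonneg_left ht_le (Real.rpow_nonneg ht0.le _)
      _ = R := by rw [hRdef, show (-(α+1):ℝ) = -α-1 by ring]
  -- Term B bound
  have hBnn : (0:ℝ) ≤ (∫ l in Set.Ici c, g l) * L ^ (-α) := by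
    refine mul_nonneg (setIntegral_nonneg measurableSet_Ici fun l hl => hgnn l ?_)
      (Real.rpow_nonneg hL0.le _)
    exact le_trans hc0.le hl
  have hIci_sub : Set.Ici c ⊆ Set.Ioi (0:ℝ) := fun l hl => lt_of_lt_of_le hc0 hl
  have hB : (∫ l in Set.Ici c, g l) * L ^ (-α) ≤ R := by
    have hgint_half := intOn_pow_exp m (half_pos ht0)
    have hint2 : IntegrableOn
        (fun l : ℝ => Real.exp (-(c*(t/2))) * (l ^ m * Real.exp (-(l*(t/2)))))
        (Set.Ici c) := by
      have h' : IntegrableOn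
          (fun l : ℝ => Real.exp (-(c*(t/2))) * (l ^ m * Real.exp (-(l*(t/2)))))
          (Set.Ioi 0) := hgint_half.const_mul _
      exact h'.mono_set hIci_sub
    have hIcinn : ∀ l : ℝ, l ∈ Set.Ici c →
        0 ≤ Real.exp (-(c*(t/2))) * (l ^ m * Real.exp (-(l*(t/2)))) := by
      intro l hl
      have hl0 : (0:ℝ) ≤ l := le_trans hc0.le hl
      positivity
    have step : ∫ l in Set.Ici c, g l ≤
        ∫ l in Set.Ici c, Real.exp (-(c*(t/2))) * (l ^ m * Real.exp (-(l*(t/2)))) := by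
      refine integral_mono_of_nonneg ?_ hint2 ?_
      · rw [EventuallyLE, ae_restrict_iff' measurableSet_Ici]
        exact Eventually.of_forall fun l hl => hgnn l (le_trans hc0.le hl)
      · rw [EventuallyLE, ae_restrict_iff' measurableSet_Ici]
        refine Eventually.of_forall fun l hl => ?_
        have hl0 : (0:ℝ) ≤ l := le_trans hc0.le hl
        have hle : Real.exp (-(l*(t/2))) ≤ Real.exp (-(c*(t/2))) := by
          refine Real.exp_le_exp.mpr ?_
          have := mul_le_mul_of_nonneg_right (hl : c ≤ l) (half_pos ht0).le
          linarith
        calc g l = (l ^ m * Real.exp (-(l*(t/2)))) * Real.exp (-(l*(t/2))) := by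
              simp only [hgdef]
              rw [show -(l*t) = -(l*(t/2)) + -(l*(t/2)) by ring, Real.exp_add]; ring
          _ ≤ (l ^ m * Real.exp (-(l*(t/2)))) * Real.exp (-(c*(t/2))) := by
              refine mul_le_mul_of_nonneg_left hle ?_
              positivity
          _ = Real.exp (-(c*(t/2))) * (l ^ m * Real.exp (-(l*(t/2)))) := by ring
    have step2 : ∫ l in Set.Ici c, Real.exp (-(c*(t/2))) * (l ^ m * Real.exp (-(l*(t/2))))
        ≤ ∫ l in Set.Ioi (0:ℝ), Real.exp (-(c*(t/2))) * (l ^ m * Real.exp (-(l*(t/2)))) := by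
      have h' : IntegrableOn
          (fun l : ℝ => Real.exp (-(c*(t/2))) * (l ^ m * Real.exp (-(l*(t/2)))))
          (Set.Ioi 0) := hgint_half.const_mul _
      refine setIntegral_mono_set h' ?_
        (HasSubset.Subset.eventuallyLE hIci_sub)
      rw [EventuallyLE, ae_restrict_iff' measurableSet_Ioi]
      refine Eventually.of_forall fun l hl => ?_
      have hl0 : (0:ℝ) < l := hl
      positivity
    have hval : ∫ l in Set.Ioi (0:ℝ), Real.exp (-(c*(t/2))) * (l ^ m * Real.exp (-(l*(t/2))))
        = Real.exp (-(c*(t/2))) * ((Nat.factorial m : ℝ) * (t/2) ^ (-1-(m:ℝ))) := by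
      rw [integral_const_mul, int_pow_exp m (half_pos ht0)]
    have hhalf : ((t/2:ℝ)) ^ (-1-(m:ℝ)) = t ^ (-1-(m:ℝ)) * 2 ^ ((1:ℝ)+(m:ℝ)) := by
      rw [div_eq_mul_inv, Real.mul_rpow ht0.le (by norm_num : (0:ℝ) ≤ 2⁻¹),
        Real.inv_rpow (by norm_num : (0:ℝ) ≤ 2),
        ← Real.rpow_neg (by norm_num : (0:ℝ) ≤ 2) (-1-(m:ℝ)),
        show (-(-1-(m:ℝ)):ℝ) = 1+(m:ℝ) by ring]
    have hLalpha : L ^ (-α-1) = L ^ (-α) * L⁻¹ := by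
      rw [show (-α-1:ℝ) = -α + -1 by ring, Real.rpow_add hL0, Real.rpow_neg_one]
    have h5 : Real.exp (-(c/2*t)) * (Nat.factorial m : ℝ) * 2 ^ ((1:ℝ)+(m:ℝ)) ≤ L⁻¹ := by
      rw [← one_div, le_div_iff₀ hL0]
      exact le_of_eq_of_le (by ring) hev4
    have hexp_eq : Real.exp (-(c*(t/2))) = Real.exp (-(c/2*t)) := by ring_nf
    calc (∫ l in Set.Ici c, g l) * L ^ (-α)
        ≤ (Real.exp (-(c*(t/2))) * ((Nat.factorial m : ℝ) * (t/2) ^ (-1-(m:ℝ)))) * L ^ (-α) := by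
          refine mul_le_mul_of_nonneg_right (step.trans (step2.trans_eq hval)) ?_
          exact Real.rpow_nonneg hL0.le _
      _ = (t ^ (-1-(m:ℝ)) * L ^ (-α)) *
            (Real.exp (-(c/2*t)) * (Nat.factorial m : ℝ) * 2 ^ ((1:ℝ)+(m:ℝ))) := by
          rw [hhalf, hexp_eq]; ring
      _ ≤ (t ^ (-1-(m:ℝ)) * L ^ (-α)) * L⁻¹ := by
          refine mul_le_mul_of_nonneg_left h5 ?_
          have := Real.rpow_nonneg ht0.le (-1-(m:ℝ))
          have := Real.rpow_nonneg hL0.le (-α)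
          positivity
      _ = R := by rw [hRdef, hLalpha]; ring
  -- assembling
  have hRHS : (Nat.factorial m : ℝ) * t ^ (-1 - (m:ℝ)) * |Real.log t| ^ (-α) * |Real.log t|⁻¹
      = (Nat.factorial m : ℝ) * R := by
    rw [habs, hRdef, show (-α-1:ℝ) = -α + -1 by ring, Real.rpow_add hL0, Real.rpow_neg_one]
    ring
  have hfacpos : (0:ℝ) < (Nat.factorial m : ℝ) := by
    exact_mod_cast Nat.factorial_pos m
  have hfac1 : (1:ℝ) ≤ (Nat.factorial m : ℝ) := by
    exact_mod_cast Nat.one_le_iff_ne_zero.mpr (Nat.factorial_ne_zero m)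
  rw [key, Real.norm_eq_abs, Real.norm_eq_abs, hRHS, abs_of_pos (mul_pos hfacpos hR0)]
  have habs1 : |∫ l in Set.Ioo (0:ℝ) c, D l * g l| ≤ (α * 2^(α+1) * C0) * R + R := by
    calc |∫ l in Set.Ioo (0:ℝ) c, D l * g l| = ‖∫ l in Set.Ioo (0:ℝ) c, D l * g l‖ :=
          (Real.norm_eq_abs _).symm
      _ ≤ ∫ l in Set.Ioo (0:ℝ) c, ‖D l * g l‖ := norm_integral_le_integral_norm _
      _ = ∫ l in Set.Ioo (0:ℝ) c, |D l * g l| :=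
          integral_congr_ae (Eventually.of_forall fun l => Real.norm_eq_abs _)
      _ = _ := habsplit
      _ ≤ (α * 2^(α+1) * C0) * R + R := add_le_add hP1 hP2
  calc |(∫ l in Set.Ioo (0:ℝ) c, D l * g l) - (∫ l in Set.Ici c, g l) * L ^ (-α)|
      ≤ |∫ l in Set.Ioo (0:ℝ) c, D l * g l| + |(∫ l in Set.Ici c, g l) * L ^ (-α)| :=
        abs_sub _ _
    _ ≤ ((α * 2^(α+1) * C0) * R + R) + R := by
        refine add_le_add habs1 ?_
        rw [abs_of_nonneg hBnn]; exact hB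
    _ = (α * 2^(α+1) * C0 + 2) * R := by ring
    _ ≤ (α * 2^(α+1) * C0 + 2) * ((Nat.factorial m : ℝ) * R) := by
        refine mul_le_mul_of_nonneg_left ?_ (by positivity)
        nlinarith [hR0, hfac1]

set_option maxHeartbeats 2000000 in
theorem part2 (α : ℝ) (hα : 0 < α) (m : ℕ) (c : ℝ) (hc : 1 < c) :
    (fun t : ℝ =>
        (∫ l in Set.Ioi c, Real.log l ^ (-α) * l ^ m * Real.exp (-(l * t))) -
          (Nat.factorial m : ℝ) * t ^ (-1 - (m:ℝ)) * |Real.log t| ^ (-α))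
      =O[nhdsWithin 0 (Set.Ioi 0)]
        (fun t : ℝ => (Nat.factorial m : ℝ) * t ^ (-1 - (m:ℝ)) * |Real.log t| ^ (-α) *
          |Real.log t|⁻¹) := by
  have hc0 : (0:ℝ) < c := lt_trans one_pos hc
  set C0 : ℝ := 2*Real.Gamma ((m:ℝ)+2⁻¹) + Real.Gamma ((m:ℝ)+2) with hC0def
  have hC0 : 0 < C0 := by
    have g1 : 0 < Real.Gamma ((m:ℝ)+2⁻¹) := Real.Gamma_pos_of_pos (by positivity)
    have g2 : 0 < Real.Gamma ((m:ℝ)+2) := Real.Gamma_pos_of_pos (by positivity)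
    positivity
  have hlogc : 0 < Real.log c := Real.log_pos hc
  set C1 : ℝ := (Real.log c) ^ (-α) + 1 with hC1def
  have hC1 : 0 < C1 := by positivity
  rw [Asymptotics.isBigO_iff]
  refine ⟨α * 2^(α+1) * C0 + 2, ?_⟩
  have hLtend : Tendsto (fun t : ℝ => -Real.log t) (nhdsWithin 0 (Set.Ioi 0)) atTop :=
    tendsto_neg_atBot_atTop.comp Real.tendsto_log_nhdsGT_zero
  have evL : ∀ᶠ t : ℝ in nhdsWithin 0 (Set.Ioi 0), 1 ≤ -Real.log t :=
    hLtend.eventually_ge_atTop 1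
  have ev2 : ∀ᶠ t : ℝ in nhdsWithin 0 (Set.Ioi 0), t < c ^ ((-2):ℝ) := by
    have h0 : (0:ℝ) < c ^ ((-2):ℝ) := Real.rpow_pos_of_pos hc0 _
    exact (tendsto_id.mono_left nhdsWithin_le_nhds).eventually_lt_const h0
  have ev3 : ∀ᶠ t : ℝ in nhdsWithin 0 (Set.Ioi 0),
      C1 * (t ^ (((m:ℝ)+1)/2) * (-Real.log t) ^ (α+1)) ≤ 1 := by
    have h := (tendsto_rpow_neg_log (((m:ℝ)+1)/2) (α+1) (by positivity)).const_mul C1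
    rw [mul_zero] at h
    exact h.eventually_le_const one_pos
  have ev4 : ∀ᶠ t : ℝ in nhdsWithin 0 (Set.Ioi 0),
      (c ^ (m+1) : ℝ) * (t ^ ((1:ℝ)+(m:ℝ)) * (-Real.log t) ^ (1:ℝ)) ≤ 1 := by
    have h := (tendsto_rpow_neg_log ((1:ℝ)+(m:ℝ)) 1 (by positivity)).const_mul ((c:ℝ) ^ (m+1))
    rw [mul_zero] at h
    exact h.eventually_le_const one_pos
  filter_upwards [evL, ev2, ev3, ev4, self_mem_nhdsWithin] with t hL1 hev2 hev3 hev4 ht0'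
  have ht0 : (0:ℝ) < t := ht0'
  set L : ℝ := -Real.log t with hLdef
  have hL0 : (0:ℝ) < L := lt_of_lt_of_le one_pos hL1
  have hlogt : Real.log t < 0 := by rw [hLdef] at hL0; linarith
  have habs : |Real.log t| = L := by rw [abs_of_neg hlogt]
  set A : ℝ := t ^ (-(2⁻¹):ℝ) with hAdef
  have hA0 : (0:ℝ) < A := Real.rpow_pos_of_pos ht0 _
  have hcA : c < A := by
    have h1 : t ^ (-(2⁻¹):ℝ) > (c ^ ((-2):ℝ)) ^ (-(2⁻¹):ℝ) :=
      Real.rpow_lt_rpow_of_neg ht0 hev2 (by norm_num)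
    have h2 : (c ^ ((-2):ℝ)) ^ (-(2⁻¹):ℝ) = c := by
      rw [← Real.rpow_mul hc0.le]; norm_num
    rw [hAdef]; rw [h2] at h1; exact h1
  set g : ℝ → ℝ := fun l => l ^ m * Real.exp (-(l*t)) with hgdef
  set D : ℝ → ℝ := fun l => (Real.log l) ^ (-α) - L ^ (-α) with hDdef
  set R : ℝ := t ^ (-1-(m:ℝ)) * L ^ (-α-1) with hRdef
  have hR0 : 0 < R := by
    have := Real.rpow_pos_of_pos ht0 (-1-(m:ℝ))
    have := Real.rpow_pos_of_pos hL0 (-α-1)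
    positivity
  have hIoi : Set.Ioc (0:ℝ) c ∪ Set.Ioi c = Set.Ioi 0 := Set.Ioc_union_Ioi_eq_Ioi hc0.le
  have hg : IntegrableOn g (Set.Ioi 0) := intOn_pow_exp m ht0
  have hgc : IntegrableOn g (Set.Ioc 0 c) :=
    hg.mono_set (by rw [← hIoi]; exact Set.subset_union_left)
  have hgci : IntegrableOn g (Set.Ioi c) :=
    hg.mono_set (by rw [← hIoi]; exact Set.subset_union_right)
  have hgnn : ∀ l : ℝ, 0 ≤ l → 0 ≤ g l := fun l hl =>
    mul_nonneg (pow_nonneg hl m) (Real.exp_nonneg _)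
  have hdisj : Disjoint (Set.Ioc (0:ℝ) c) (Set.Ioi c) := Set.Ioc_disjoint_Ioi le_rfl
  have hsplit : ∫ l in Set.Ioi (0:ℝ), g l
      = (∫ l in Set.Ioc (0:ℝ) c, g l) + ∫ l in Set.Ioi c, g l := by
    rw [← hIoi, setIntegral_union hdisj measurableSet_Ioi hgc hgci]
  set f : ℝ → ℝ := fun l => Real.log l ^ (-α) * l ^ m * Real.exp (-(l * t)) with hfdef
  have hmono : ∀ l : ℝ, l ∈ Set.Ioi c → Real.log l ^ (-α) ≤ Real.log c ^ (-α) := by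
    intro l hl
    have h1 : Real.log c ≤ Real.log l := Real.log_le_log hc0 (le_of_lt hl)
    exact Real.rpow_le_rpow_of_nonpos hlogc h1 (by linarith)
  have hfm : AEStronglyMeasurable f (volume.restrict (Set.Ioi c)) := by
    refine ContinuousOn.aestronglyMeasurable ?_ measurableSet_Ioi
    refine ContinuousOn.mul (ContinuousOn.mul ?_ (continuous_pow m).continuousOn)
      (Real.continuous_exp.comp (by continuity)).continuousOn
    refine ContinuousOn.rpow_const (Real.continuousOn_log.mono ?_) ?_
    · intro l hl
      have : (0:ℝ) < l := lt_trans hc0 hl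
      exact ne_of_gt this
    · intro l hl
      left
      have : (0:ℝ) < Real.log l := Real.log_pos (lt_trans hc hl)
      exact ne_of_gt this
  have hfnn : ∀ l : ℝ, l ∈ Set.Ioi c → 0 ≤ f l := by
    intro l hl
    have h2 : (0:ℝ) ≤ Real.log l := (Real.log_pos (lt_trans hc hl)).le
    have h3 : (0:ℝ) ≤ l := (lt_trans hc0 hl).le
    simp only [hfdef]
    exact mul_nonneg (mul_nonneg (Real.rpow_nonneg h2 _) (pow_nonneg h3 m))
      (Real.exp_nonneg _)
  have hf : IntegrableOn f (Set.Ioi c) := by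
    refine Integrable.mono' (hgci.const_mul ((Real.log c) ^ (-α))) hfm ?_
    rw [ae_restrict_iff' measurableSet_Ioi]
    refine Eventually.of_forall fun l hl => ?_
    rw [Real.norm_eq_abs, abs_of_nonneg (hfnn l hl)]
    have h3 : 0 ≤ l ^ m * Real.exp (-(l*t)) :=
      mul_nonneg (pow_nonneg (lt_trans hc0 hl).le m) (Real.exp_nonneg _)
    calc f l = Real.log l ^ (-α) * (l ^ m * Real.exp (-(l*t))) := by simp only [hfdef]; ring
      _ ≤ Real.log c ^ (-α) * (l ^ m * Real.exp (-(l*t))) :=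
          mul_le_mul_of_nonneg_right (hmono l hl) h3
      _ = Real.log c ^ (-α) * g l := by simp only [hgdef]
  have hDg : IntegrableOn (fun l => D l * g l) (Set.Ioi c) := by
    refine IntegrableOn.congr_fun (hf.sub (hgci.const_mul (L ^ (-α))))
      (fun l hl => ?_) measurableSet_Ioi
    simp only [hDdef, hfdef, hgdef, Pi.sub_apply]; ring
  have hfac : (Nat.factorial m : ℝ) * t ^ (-1-(m:ℝ)) = ∫ l in Set.Ioi (0:ℝ), g l :=
    (int_pow_exp m ht0).symm
  have key : (∫ l in Set.Ioi c, f l)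
        - (Nat.factorial m : ℝ) * t ^ (-1 - (m:ℝ)) * |Real.log t| ^ (-α)
      = (∫ l in Set.Ioi c, D l * g l) - (∫ l in Set.Ioc (0:ℝ) c, g l) * L ^ (-α) := by
    rw [habs]
    have e1 : ∫ l in Set.Ioi c, D l * g l
        = (∫ l in Set.Ioi c, f l) - L ^ (-α) * ∫ l in Set.Ioi c, g l := by
      rw [← integral_const_mul, ← integral_sub hf (hgci.const_mul _)]
      refine setIntegral_congr_fun measurableSet_Ioi fun l hl => ?_
      simp only [hDdef, hfdef, hgdef]; ring
    have e2 : (Nat.factorial m : ℝ) * t ^ (-1-(m:ℝ))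
        = (∫ l in Set.Ioc (0:ℝ) c, g l) + ∫ l in Set.Ioi c, g l := by rw [hfac, hsplit]
    linear_combination (-1 : ℝ) * e1 + (-(L ^ (-α))) * e2
  -- splitting
  have hdisj2 : Disjoint (Set.Ioc c A) (Set.Ioi A) := Set.Ioc_disjoint_Ioi le_rfl
  have hsplit2 : Set.Ioc c A ∪ Set.Ioi A = Set.Ioi c := Set.Ioc_union_Ioi_eq_Ioi hcA.le
  have hDgabs : IntegrableOn (fun l => |D l * g l|) (Set.Ioi c) := hDg.abs
  have habsplit : ∫ l in Set.Ioi c, |D l * g l|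
      = (∫ l in Set.Ioc c A, |D l * g l|) + ∫ l in Set.Ioi A, |D l * g l| := by
    rw [← hsplit2, setIntegral_union hdisj2 measurableSet_Ioi
      (hDgabs.mono_set (by rw [← hsplit2]; exact Set.subset_union_left))
      (hDgabs.mono_set (by rw [← hsplit2]; exact Set.subset_union_right))]
  -- far piece (MVT)
  have hP1 : ∫ l in Set.Ioi A, |D l * g l| ≤ (α * 2^(α+1) * C0) * R := by
    have hL2 : (0:ℝ) < L/2 := by linarith
    have hK0 : (0:ℝ) ≤ α * (L/2)^(-α-1) := by positivity
    have hD1 : ∀ l ∈ Set.Ioi A, |D l| ≤ (α * (L/2)^(-α-1)) * |Real.log (l*t)| := by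
      intro l hl
      have hl0 : (0:ℝ) < l := lt_trans hA0 hl
      have hla : Real.log A < Real.log l := Real.log_lt_log hA0 hl
      rw [hAdef, Real.log_rpow ht0] at hla
      have hx : L/2 ≤ Real.log l := by rw [hLdef] at *; linarith
      have hy : L/2 ≤ L := by linarith
      have hmvt := mvt_rpow hα hL2 hx hy
      have harg : Real.log l - L = Real.log (l*t) := by
        rw [Real.log_mul (ne_of_gt hl0) (ne_of_gt ht0), hLdef]; ring
      simp only [hDdef]
      calc |Real.log l ^ (-α) - L ^ (-α)|
          ≤ α * (L/2)^(-α-1) * |Real.log l - L| := hmvt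
        _ = α * (L/2)^(-α-1) * |Real.log (l*t)| := by rw [harg]
    have h := piece_mvt (m := m) ht0 hK0 measurableSet_Ioi
      (fun l hl => lt_trans hA0 hl) hD1
    have hpow : ((L/2 : ℝ))^(-α-1) = L^(-α-1) * 2^(α+1) := by
      rw [div_eq_mul_inv, Real.mul_rpow hL0.le (by norm_num : (0:ℝ) ≤ 2⁻¹),
        Real.inv_rpow (by norm_num : (0:ℝ) ≤ 2),
        ← Real.rpow_neg (by norm_num : (0:ℝ) ≤ 2) (-α-1),
        show (-(-α-1):ℝ) = α+1 by ring]
    calc ∫ l in Set.Ioi A, |D l * g l|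
        = ∫ l in Set.Ioi A, |D l * (l ^ m * Real.exp (-(l*t)))| := by
          refine setIntegral_congr_fun measurableSet_Ioi fun l hl => ?_
          simp only [hgdef]
      _ ≤ (α * (L/2)^(-α-1)) * (C0 * t ^ (-1-(m:ℝ))) := h
      _ = (α * 2^(α+1) * C0) * R := by rw [hpow, hRdef]; ring
  -- near piece
  have hP2 : ∫ l in Set.Ioc c A, |D l * g l| ≤ R := by
    have hbound : ∀ l ∈ Set.Ioc c A, ‖|D l * g l|‖ ≤ C1 * t ^ ((-2⁻¹)*(m:ℝ)) := by
      intro l hl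
      have hl0 : (0:ℝ) < l := lt_trans hc0 hl.1
      have h1 : Real.log c ≤ Real.log l := Real.log_le_log hc0 hl.1.le
      have h2 : Real.log l ^ (-α) ≤ Real.log c ^ (-α) :=
        Real.rpow_le_rpow_of_nonpos hlogc h1 (by linarith)
      have h3 : L ^ (-α) ≤ 1 := Real.rpow_le_one_of_one_le_of_nonpos hL1 (by linarith)
      have hD2 : |D l| ≤ C1 := by
        simp only [hDdef]
        refine (abs_sub _ _).trans ?_
        have hnl : (0:ℝ) < Real.log l := lt_of_lt_of_le hlogc h1
        rw [abs_of_nonneg (Real.rpow_nonneg hnl.le _),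
          abs_of_nonneg (Real.rpow_nonneg hL0.le _), hC1def]
        exact add_le_add h2 h3
      have hg1 : g l ≤ t ^ ((-2⁻¹)*(m:ℝ)) := by
        have hAm : (A:ℝ) ^ m = t ^ ((-2⁻¹)*(m:ℝ)) := by
          rw [hAdef, ← Real.rpow_natCast (t ^ (-(2⁻¹):ℝ)) m, ← Real.rpow_mul ht0.le]
        have hlm : l ^ m ≤ A ^ m := pow_le_pow_left₀ hl0.le hl.2 m
        have hexp : Real.exp (-(l*t)) ≤ 1 := by
          rw [Real.exp_le_one_iff]
          have : (0:ℝ) ≤ l * t := mul_nonneg hl0.le ht0.le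
          linarith
        calc g l = l ^ m * Real.exp (-(l*t)) := by simp only [hgdef]
          _ ≤ A ^ m * 1 := mul_le_mul hlm hexp (Real.exp_nonneg _) (pow_nonneg hA0.le m)
          _ = t ^ ((-2⁻¹)*(m:ℝ)) := by rw [mul_one, hAm]
      rw [Real.norm_eq_abs, abs_abs, abs_mul, abs_of_nonneg (hgnn l hl0.le)]
      exact mul_le_mul hD2 hg1 (hgnn l hl0.le) hC1.le
    have hDgIoc : IntegrableOn (fun l => |D l * g l|) (Set.Ioc c A) :=
      hDgabs.mono_set (by rw [← hsplit2]; exact Set.subset_union_left)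
    have h := norm_setIntegral_le_of_norm_le_const
      (measure_Ioc_lt_top : volume (Set.Ioc c A) < ⊤) hbound
    have hvol : (volume (Set.Ioc c A)).toReal = A - c := by
      rw [Real.volume_Ioc, ENNReal.toReal_ofReal (by linarith)]
    have hIab : ∫ l in Set.Ioc c A, |D l * g l|
        ≤ C1 * t ^ ((-2⁻¹)*(m:ℝ)) * t ^ (-(2⁻¹):ℝ) := by
      calc ∫ l in Set.Ioc c A, |D l * g l| ≤ ‖∫ l in Set.Ioc c A, |D l * g l|‖ :=
            le_abs_self _
        _ ≤ C1 * t ^ ((-2⁻¹)*(m:ℝ)) * (volume (Set.Ioc c A)).toReal := h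
        _ = C1 * t ^ ((-2⁻¹)*(m:ℝ)) * (A - c) := by rw [hvol]
        _ ≤ C1 * t ^ ((-2⁻¹)*(m:ℝ)) * t ^ (-(2⁻¹):ℝ) := by
            refine mul_le_mul_of_nonneg_left ?_ ?_
            · rw [hAdef]; linarith
            · positivity
    refine hIab.trans ?_
    have hxp : t ^ ((-2⁻¹)*(m:ℝ)) * t ^ (-(2⁻¹):ℝ) = t ^ (-(((m:ℝ)+1)/2)) := by
      rw [← Real.rpow_add ht0]; ring_nf
    have hppos : (0:ℝ) < t ^ (((m:ℝ)+1)/2) * L ^ (α+1) := by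
      have := Real.rpow_pos_of_pos ht0 (((m:ℝ)+1)/2)
      have := Real.rpow_pos_of_pos hL0 (α+1)
      positivity
    have h7 : C1 ≤ t ^ (-(((m:ℝ)+1)/2)) * L ^ (-(α+1)) := by
      rw [Real.rpow_neg ht0.le, Real.rpow_neg hL0.le, ← mul_inv,
        inv_eq_one_div (t ^ (((m:ℝ)+1)/2) * L ^ (α+1)), le_div_iff₀ hppos]
      exact le_of_eq_of_le (by ring) hev3
    have hq : t ^ (-(((m:ℝ)+1)/2)) * t ^ (-(((m:ℝ)+1)/2)) = t ^ (-1-(m:ℝ)) := by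
      rw [← Real.rpow_add ht0]; ring_nf
    calc C1 * t ^ ((-2⁻¹)*(m:ℝ)) * t ^ (-(2⁻¹):ℝ)
        = C1 * (t ^ ((-2⁻¹)*(m:ℝ)) * t ^ (-(2⁻¹):ℝ)) := by ring
      _ = C1 * t ^ (-(((m:ℝ)+1)/2)) := by rw [hxp]
      _ ≤ (t ^ (-(((m:ℝ)+1)/2)) * L ^ (-(α+1))) * t ^ (-(((m:ℝ)+1)/2)) :=
          mul_le_mul_of_nonneg_right h7 (Real.rpow_nonneg ht0.le _)
      _ = (t ^ (-(((m:ℝ)+1)/2)) * t ^ (-(((m:ℝ)+1)/2))) * L ^ (-(α+1)) := by ring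
      _ = R := by rw [hq, hRdef, show (-(α+1):ℝ) = -α-1 by ring]
  -- term B
  have hBnn : (0:ℝ) ≤ (∫ l in Set.Ioc (0:ℝ) c, g l) * L ^ (-α) := by
    refine mul_nonneg (setIntegral_nonneg measurableSet_Ioc fun l hl => hgnn l hl.1.le)
      (Real.rpow_nonneg hL0.le _)
  have hB : (∫ l in Set.Ioc (0:ℝ) c, g l) * L ^ (-α) ≤ R := by
    have hgbound : ∀ l ∈ Set.Ioc (0:ℝ) c, ‖g l‖ ≤ (c:ℝ) ^ m := by
      intro l hl
      have hexp : Real.exp (-(l*t)) ≤ 1 := by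
        rw [Real.exp_le_one_iff]
        have : (0:ℝ) ≤ l * t := mul_nonneg hl.1.le ht0.le
        linarith
      rw [Real.norm_eq_abs, abs_of_nonneg (hgnn l hl.1.le)]
      calc g l = l ^ m * Real.exp (-(l*t)) := by simp only [hgdef]
        _ ≤ c ^ m * 1 := mul_le_mul (pow_le_pow_left₀ hl.1.le hl.2 m) hexp
            (Real.exp_nonneg _) (pow_nonneg hc0.le m)
        _ = c ^ m := mul_one _
    have h := norm_setIntegral_le_of_norm_le_const
      (measure_Ioc_lt_top : volume (Set.Ioc (0:ℝ) c) < ⊤) hgbound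
    have hvol : (volume (Set.Ioc (0:ℝ) c)).toReal = c := by
      rw [Real.volume_Ioc, ENNReal.toReal_ofReal (by linarith)]; ring_nf
    have hI : ∫ l in Set.Ioc (0:ℝ) c, g l ≤ c ^ (m+1) := by
      calc ∫ l in Set.Ioc (0:ℝ) c, g l ≤ ‖∫ l in Set.Ioc (0:ℝ) c, g l‖ := le_abs_self _
        _ ≤ (c:ℝ) ^ m * (volume (Set.Ioc (0:ℝ) c)).toReal := h
        _ = c ^ (m+1) := by rw [hvol, pow_succ]
    have hppos : (0:ℝ) < t ^ ((1:ℝ)+(m:ℝ)) * L := by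
      have := Real.rpow_pos_of_pos ht0 ((1:ℝ)+(m:ℝ))
      positivity
    have h7 : (c:ℝ) ^ (m+1) ≤ t ^ (-((1:ℝ)+(m:ℝ))) * L⁻¹ := by
      rw [Real.rpow_neg ht0.le, ← mul_inv,
        inv_eq_one_div (t ^ ((1:ℝ)+(m:ℝ)) * L), le_div_iff₀ hppos]
      refine le_of_eq_of_le ?_ hev4
      rw [Real.rpow_one]
    have hqq : t ^ (-((1:ℝ)+(m:ℝ))) = t ^ (-1-(m:ℝ)) := by ring_nf
    calc (∫ l in Set.Ioc (0:ℝ) c, g l) * L ^ (-α)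
        ≤ (c:ℝ) ^ (m+1) * L ^ (-α) :=
          mul_le_mul_of_nonneg_right hI (Real.rpow_nonneg hL0.le _)
      _ ≤ (t ^ (-((1:ℝ)+(m:ℝ))) * L⁻¹) * L ^ (-α) :=
          mul_le_mul_of_nonneg_right h7 (Real.rpow_nonneg hL0.le _)
      _ = R := by
          rw [hqq, hRdef, show (-α-1:ℝ) = -α + -1 by ring, Real.rpow_add hL0,
            Real.rpow_neg_one]
          ring
  -- assemble
  have hRHS : (Nat.factorial m : ℝ) * t ^ (-1 - (m:ℝ)) * |Real.log t| ^ (-α) * |Real.log t|⁻¹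
      = (Nat.factorial m : ℝ) * R := by
    rw [habs, hRdef, show (-α-1:ℝ) = -α + -1 by ring, Real.rpow_add hL0, Real.rpow_neg_one]
    ring
  have hfacpos : (0:ℝ) < (Nat.factorial m : ℝ) := by exact_mod_cast Nat.factorial_pos m
  have hfac1 : (1:ℝ) ≤ (Nat.factorial m : ℝ) := by
    exact_mod_cast Nat.one_le_iff_ne_zero.mpr (Nat.factorial_ne_zero m)
  rw [key, Real.norm_eq_abs, Real.norm_eq_abs, hRHS, abs_of_pos (mul_pos hfacpos hR0)]
  have habs1 : |∫ l in Set.Ioi c, D l * g l| ≤ R + (α * 2^(α+1) * C0) * R := by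
    calc |∫ l in Set.Ioi c, D l * g l| = ‖∫ l in Set.Ioi c, D l * g l‖ :=
          (Real.norm_eq_abs _).symm
      _ ≤ ∫ l in Set.Ioi c, ‖D l * g l‖ := norm_integral_le_integral_norm _
      _ = ∫ l in Set.Ioi c, |D l * g l| :=
          integral_congr_ae (Eventually.of_forall fun l => Real.norm_eq_abs _)
      _ = _ := habsplit
      _ ≤ R + (α * 2^(α+1) * C0) * R := add_le_add hP2 hP1
  calc |(∫ l in Set.Ioi c, D l * g l) - (∫ l in Set.Ioc (0:ℝ) c, g l) * L ^ (-α)|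
      ≤ |∫ l in Set.Ioi c, D l * g l| + |(∫ l in Set.Ioc (0:ℝ) c, g l) * L ^ (-α)| :=
        abs_sub _ _
    _ ≤ (R + (α * 2^(α+1) * C0) * R) + R := by
        refine add_le_add habs1 ?_
        rw [abs_of_nonneg hBnn]; exact hB
    _ = (α * 2^(α+1) * C0 + 2) * R := by ring
    _ ≤ (α * 2^(α+1) * C0 + 2) * ((Nat.factorial m : ℝ) * R) := by
        refine mul_le_mul_of_nonneg_left ?_ (by positivity)
        nlinarith [hR0, hfac1]


end ProofHelpers

/-- Lemma `L` of the paper.  For `α > 0`, `m ∈ ℤ₊`,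
`I_m^{(∞)}(t) = ∫₀^c (-log λ)^{-α} λ^m e^{-λt} dλ` (`0 < c < 1`) satisfies
`I_m^{(∞)}(t) = m! t^{-1-m} |log t|^{-α} (1 + O(|log t|⁻¹))` as `t → ∞`, and
`I_m^{(0)}(t) = ∫_c^∞ (log λ)^{-α} λ^m e^{-λt} dλ` (`c > 1`) has the same asymptotics as
`t → 0`. -/
theorem statement8 (α : ℝ) (hα : 0 < α) (m : ℕ) :
    (∀ c : ℝ, 0 < c → c < 1 →
      (fun t : ℝ =>
          (∫ l in Set.Ioo (0:ℝ) c, (-Real.log l) ^ (-α) * l ^ m * Real.exp (-(l * t))) -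
            (Nat.factorial m : ℝ) * t ^ (-1 - (m:ℝ)) * |Real.log t| ^ (-α))
        =O[atTop]
          fun t : ℝ => (Nat.factorial m : ℝ) * t ^ (-1 - (m:ℝ)) * |Real.log t| ^ (-α) *
            |Real.log t|⁻¹) ∧
    (∀ c : ℝ, 1 < c →
      (fun t : ℝ =>
          (∫ l in Set.Ioi c, Real.log l ^ (-α) * l ^ m * Real.exp (-(l * t))) -
            (Nat.factorial m : ℝ) * t ^ (-1 - (m:ℝ)) * |Real.log t| ^ (-α))
        =O[nhdsWithin 0 (Set.Ioi 0)]
          fun t : ℝ => (Nat.factorial m : ℝ) * t ^ (-1 - (m:ℝ)) * |Real.log t| ^ (-α) *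
            |Real.log t|⁻¹) := by
  exact ⟨fun c hc0 hc1 => part1 α hα m c hc0 hc1, fun c hc => part2 α hα m c hc⟩
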